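/- Suppose $y_{11} = y_{00}^{-1} y_{10} y_{01}$ with $y_{00}\neq 0$ (multiplicative group solution). Then the value $\bar{y}_{11}$ determined by the six-point multi-ratio equation $(y_0-y_{10})(y_{01}-y_{11})(y_{00}-\bar{y}_{11}) = (y_0-y_{11})(y_{00}-y_{10})(y_{01}-\bar{y}_{11})$ equals $y_0^{-1} y_{10} y_{01}$, provided $y_0\neq 0$ and the relevant nondegeneracy conditions hold. -/

import Mathlib

/-! Both sides of the multi-ratio equation are affine in `ȳ₁₁` with distinct leading
coefficients, so it has at most one root; a direct computation shows that
`y₀⁻¹ y₁₀ y₀₁` is a root once `y₁₁ = y₀₀⁻¹ y₁₀ y₀₁`. -/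

theorem eq_of_mul_sub_eq_mul_sub {R : Type*} [CommRing R] [NoZeroDivisors R] {a b p q z w : R}
    (hab : a ≠ b) (hz : a * (p - z) = b * (q - z)) (hw : a * (p - w) = b * (q - w)) : z = w := by
  have h : (a - b) * (w - z) = 0 := by linear_combination hz - hw
  exact (sub_eq_zero.mp ((mul_eq_zero.mp h).resolve_left (sub_ne_zero.mpr hab))).symm

theorem multiRatio_eq_of_mulSolution {K : Type*} [Field K] {y0 y00 y10 y01 : K}
    (hy0 : y0 ≠ 0) (hy00 : y00 ≠ 0) :
    (y0 - y10) * (y01 - y00⁻¹ * y10 * y01) * (y00 - y0⁻¹ * y10 * y01)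
      = (y0 - y00⁻¹ * y10 * y01) * (y00 - y10) * (y01 - y0⁻¹ * y10 * y01) := by
  field_simp

/-- The multiplicative-group solution `y₁₁ = y₀₀⁻¹ y₁₀ y₀₁` is preserved by the
action `r₀`: the updated value is `ȳ₁₁ = y₀⁻¹ y₁₀ y₀₁`. -/
theorem stmt_6 {K : Type*} [Field K] (y0 y00 y10 y01 y11 z : K)
    (hy0 : y0 ≠ 0) (hy00 : y00 ≠ 0)
    (h11 : y11 = y00⁻¹ * y10 * y01)
    (hnd : (y0 - y10) * (y01 - y11) ≠ (y0 - y11) * (y00 - y10))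
    (hz : (y0 - y10) * (y01 - y11) * (y00 - z)
        = (y0 - y11) * (y00 - y10) * (y01 - z)) :
    z = y0⁻¹ * y10 * y01 := by
  subst h11
  exact eq_of_mul_sub_eq_mul_sub hnd hz (multiRatio_eq_of_mulSolution hy0 hy00)
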